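/- arXiv:2512.19929 — 2 statements merged into one kernel-verified Lean document; each statement's English description precedes it below -/
import Mathlib

section
/- If the set of zeros of the characteristic function of a real random variable ε does not contain any nonempty open interval, then for any real random variable Z independent of ε and any real random variable Z₀ independent of ε, the equality in distribution Z + ε = Z₀ + ε (in law) implies Z = Z₀ in law. -/
/-!
By independence the laws of `Z + ε` and `Z₀ + ε` are convolutions, so their characteristic
functions factor: `κ_Z κ_ε = κ_{Z₀} κ_ε`. Hence `κ_Z = κ_{Z₀}` on the complement of the zero set
of `κ_ε`, which is dense; characteristic functions are continuous, so they agree everywhere, and a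
finite measure on `ℝ` is determined by its characteristic function.
-/

open MeasureTheory ProbabilityTheory

noncomputable def charFun' (μ : Measure ℝ) (t : ℝ) : ℂ :=
  ∫ x, Complex.exp (t * x * Complex.I) ∂μ

lemma charFun'_eq_charFun (μ : Measure ℝ) : charFun' μ = charFun μ :=
  funext fun t => (charFun_apply_real t).symm

lemma Continuous.eq_of_mul_eq_mul_of_dense_ne_zero {X M₀ : Type*} [TopologicalSpace X]
    [TopologicalSpace M₀] [T2Space M₀] [Mul M₀] [Zero M₀] [IsRightCancelMulZero M₀]
    {f g k : X → M₀} (hf : Continuous f) (hg : Continuous g) (hk : Dense {x | k x ≠ 0})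
    (h : f * k = g * k) : f = g :=
  hf.ext_on hk hg fun _ hx => mul_right_cancel₀ hx (congrFun h _)

theorem Measure.eq_of_conv_eq_conv_of_dense_charFun_ne_zero {E : Type*} [NormedAddCommGroup E]
    [InnerProductSpace ℝ E] [CompleteSpace E] [MeasurableSpace E] [BorelSpace E]
    [SecondCountableTopology E] {μ₁ μ₂ ν : Measure E} [IsFiniteMeasure μ₁] [IsFiniteMeasure μ₂]
    [IsFiniteMeasure ν] (hν : Dense {t | charFun ν t ≠ 0}) (h : μ₁ ∗ ν = μ₂ ∗ ν) :
    μ₁ = μ₂ := by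
  refine Measure.ext_of_charFun <|
    continuous_charFun.eq_of_mul_eq_mul_of_dense_ne_zero continuous_charFun hν ?_
  ext t
  simp only [Pi.mul_apply, ← charFun_conv, h]

/-- If the zero set of the characteristic function of `ε` contains no nonempty open interval,
then for `Z, Z₀` independent of `ε`, equality in law of `Z + ε` and `Z₀ + ε` implies
equality in law of `Z` and `Z₀`. -/
theorem stmt0 {Ω : Type*} [MeasurableSpace Ω] (P : Measure Ω) [IsProbabilityMeasure P]
    (ε Z Z₀ : Ω → ℝ) (hε : Measurable ε) (hZ : Measurable Z) (hZ₀ : Measurable Z₀)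
    (hindep : IndepFun Z ε P) (hindep₀ : IndepFun Z₀ ε P)
    (hzero : ∀ a b : ℝ, a < b → ∃ t ∈ Set.Ioo a b, charFun' (P.map ε) t ≠ 0)
    (heq : P.map (fun ω => Z ω + ε ω) = P.map (fun ω => Z₀ ω + ε ω)) :
    P.map Z = P.map Z₀ := by
  have hdense : Dense {t | charFun (P.map ε) t ≠ 0} :=
    dense_of_exists_between fun a b hab => by
      obtain ⟨t, ht, hne⟩ := hzero a b hab
      exact ⟨t, by rwa [charFun'_eq_charFun] at hne, ht⟩
  refine Measure.eq_of_conv_eq_conv_of_dense_charFun_ne_zero hdense ?_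
  rw [← hindep.map_add_eq_map_conv_map₀ hZ.aemeasurable hε.aemeasurable,
    ← hindep₀.map_add_eq_map_conv_map₀ hZ₀.aemeasurable hε.aemeasurable]
  exact heq
end

section
/- Let μ₀ be a probability measure on ℝ satisfying μ₀([a,b]) ≤ A(b−a) for all intervals [a,b] and some A > 0, let X be an ℝ^d-valued random variable with law pushing forward to μ₀ under x ↦ β_jᵀx, and let ε > 0, C_ε = (E‖X‖^p/ε)^{1/p}. Then for all t ∈ ℝ, P(|β_jᵀX − t| ≤ ε‖X‖) ≤ 2A ε^{1−1/p}(E‖X‖^p)^{1/p} + ε. -/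
open MeasureTheory Set
open scoped RealInnerProductSpace

/-! Split according to whether `‖X‖` exceeds `C = (E‖X‖^p / ε)^{1/p}`. By Markov's inequality
for `‖X‖^p` this has probability at most `ε`; otherwise `|⟪β, X⟫ - t| ≤ ε‖X‖ ≤ εC`, an interval
event of probability at most `2AεC = 2Aε^{1-1/p}(E‖X‖^p)^{1/p}` by the bound on the law. -/

namespace MeasureTheory

variable {α : Type*} [MeasurableSpace α] {μ : Measure α}

/-- The strict inequality in the event is what makes the bound hold also when `∫ Y = 0`. -/
lemma measureReal_integral_div_lt_le [IsFiniteMeasure μ] {Y : α → ℝ} (hY : 0 ≤ᵐ[μ] Y)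
    (hint : Integrable Y μ) {ε : ℝ} (hε : 0 < ε) :
    μ.real {x | (∫ y, Y y ∂μ) / ε < Y x} ≤ ε := by
  set M := ∫ y, Y y ∂μ
  rcases (integral_nonneg_of_ae hY).eq_or_lt with hM | hM
  · have hM0 : M = 0 := hM.symm
    have hY0 : Y =ᵐ[μ] 0 := (integral_eq_zero_iff_of_nonneg_ae hY hint).1 hM0
    have hnull : ∀ᵐ x ∂μ, ¬ M / ε < Y x := hY0.mono fun x hx => by simp [hx, hM0]
    simp only [measureReal_def, ae_iff, not_not] at hnull ⊢
    simp [hnull, hε.le]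
  · have hc : 0 < M / ε := div_pos hM hε
    have hmarkov := mul_meas_ge_le_integral_of_nonneg hY hint (M / ε)
    refine le_of_mul_le_mul_left ?_ hc
    calc M / ε * μ.real {x | M / ε < Y x} ≤ M / ε * μ.real {x | M / ε ≤ Y x} :=
          mul_le_mul_of_nonneg_left (measureReal_mono fun x (h : M / ε < Y x) => h.le) hc.le
      _ ≤ M / ε * ε := by rwa [div_mul_cancel₀ _ hε.ne']

lemma measureReal_rpow_lt_norm_le [IsFiniteMeasure μ] {E : Type*} [NormedAddCommGroup E]
    (X : α → E) {p ε : ℝ} (hp : 0 < p) (hε : 0 < ε)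
    (hmom : Integrable (fun x => ‖X x‖ ^ p) μ) :
    μ.real {x | ((∫ y, ‖X y‖ ^ p ∂μ) / ε) ^ p⁻¹ < ‖X x‖} ≤ ε := by
  have hM : 0 ≤ (∫ y, ‖X y‖ ^ p ∂μ) / ε :=
    div_nonneg (integral_nonneg fun y => by positivity) hε.le
  simp_rw [Real.rpow_inv_lt_iff_of_pos hM (norm_nonneg _) hp]
  exact measureReal_integral_div_lt_le (ae_of_all _ fun y => by positivity) hmom hε

end MeasureTheory

lemma measureReal_abs_sub_le_le_of_law {Ω : Type*} [MeasurableSpace Ω] {P : Measure Ω}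
    {f : Ω → ℝ} (hf : Measurable f) {A : ℝ}
    (hlaw : ∀ a b : ℝ, a ≤ b → ((P.map f) (Icc a b)).toReal ≤ A * (b - a))
    (t : ℝ) {r : ℝ} (hr : 0 ≤ r) :
    P.real {ω | |f ω - t| ≤ r} ≤ 2 * A * r := by
  have hset : {ω | |f ω - t| ≤ r} = f ⁻¹' Icc (t - r) (t + r) := by
    ext ω
    simp only [mem_ofPred_eq, mem_preimage, mem_Icc, abs_le]
    constructor <;> rintro ⟨h₁, h₂⟩ <;> constructor <;> linarith
  rw [hset, measureReal_def, ← Measure.map_apply hf measurableSet_Icc]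
  linarith [hlaw (t - r) (t + r) (by linarith)]

theorem stmt17_general {Ω : Type*} [MeasurableSpace Ω] (P : Measure Ω) [IsProbabilityMeasure P]
    {d : ℕ} (X : Ω → EuclideanSpace ℝ (Fin d)) (hX : Measurable X)
    (μ₀ : Measure ℝ) (βj : EuclideanSpace ℝ (Fin d))
    (hlaw : μ₀ = P.map (fun ω => ⟪βj, X ω⟫))
    (A p ε : ℝ) (hp : 2 < p) (hε : 0 < ε)
    (hmom : Integrable (fun ω => ‖X ω‖ ^ p) P)
    (hA' : ∀ a b : ℝ, a ≤ b → (μ₀ (Icc a b)).toReal ≤ A * (b - a)) :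
    ∀ t : ℝ, (P {ω | |⟪βj, X ω⟫ - t| ≤ ε * ‖X ω‖}).toReal ≤
      2 * A * ε ^ (1 - 1 / p) * (∫ ω, ‖X ω‖ ^ p ∂P) ^ (1 / p) + ε := by
  intro t
  subst hlaw
  have hp0 : 0 < p := by linarith
  set M := ∫ ω, ‖X ω‖ ^ p ∂P
  have hM : 0 ≤ M := integral_nonneg fun ω => by positivity
  set C := (M / ε) ^ p⁻¹ with hC_def
  have hcover : {ω | |⟪βj, X ω⟫ - t| ≤ ε * ‖X ω‖} ⊆
      {ω | C < ‖X ω‖} ∪ {ω | |⟪βj, X ω⟫ - t| ≤ ε * C} := fun ω hω =>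
    (lt_or_ge C ‖X ω‖).imp id fun h => hω.trans (mul_le_mul_of_nonneg_left h hε.le)
  have hεC : ε * C = ε ^ (1 - 1 / p) * M ^ (1 / p) := by
    rw [hC_def, Real.div_rpow hM hε.le, Real.rpow_sub hε, Real.rpow_one, one_div]
    field_simp
  calc P.real {ω | |⟪βj, X ω⟫ - t| ≤ ε * ‖X ω‖}
      ≤ P.real {ω | C < ‖X ω‖} + P.real {ω | |⟪βj, X ω⟫ - t| ≤ ε * C} :=
        (measureReal_mono hcover).trans (measureReal_union_le _ _)
    _ ≤ ε + 2 * A * (ε * C) :=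
        add_le_add (measureReal_rpow_lt_norm_le X hp0 hε hmom)
          (measureReal_abs_sub_le_le_of_law (by fun_prop) hA' t (by positivity))
    _ = 2 * A * ε ^ (1 - 1 / p) * M ^ (1 / p) + ε := by rw [hεC]; ring

/-- If `μ₀`, the law of `β_jᵀX`, satisfies `μ₀([a,b]) ≤ A(b−a)` and `E‖X‖^p < ∞` for some
`p > 2`, then for every `ε > 0` and `t`,
`P(|β_jᵀX − t| ≤ ε‖X‖) ≤ 2A ε^{1−1/p}(E‖X‖^p)^{1/p} + ε`. -/
theorem stmt17 {Ω : Type*} [MeasurableSpace Ω] (P : Measure Ω) [IsProbabilityMeasure P]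
    {d : ℕ} (X : Ω → EuclideanSpace ℝ (Fin d)) (hX : Measurable X)
    (μ₀ : Measure ℝ) (βj : EuclideanSpace ℝ (Fin d))
    (hlaw : μ₀ = P.map (fun ω => ⟪βj, X ω⟫))
    (A p ε : ℝ) (hA : 0 < A) (hp : 2 < p) (hε : 0 < ε)
    (hmom : Integrable (fun ω => ‖X ω‖ ^ p) P)
    (hA' : ∀ a b : ℝ, a ≤ b → (μ₀ (Icc a b)).toReal ≤ A * (b - a)) :
    ∀ t : ℝ, (P {ω | |⟪βj, X ω⟫ - t| ≤ ε * ‖X ω‖}).toReal ≤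
      2 * A * ε ^ (1 - 1 / p) * (∫ ω, ‖X ω‖ ^ p ∂P) ^ (1 / p) + ε :=
  stmt17_general P X hX μ₀ βj hlaw A p ε hp hε hmom hA'
end
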